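/- arXiv:2012.12292 — 3 statements merged into one kernel-verified Lean document; each statement's English description precedes it below -/
import Mathlib

section
/- For every real θ one has 0 ≤ 7 + 8·cos(4θ) + cos(8θ) ≤ (3 + cos(4θ))²; consequently both eigenvalues λ± = 1 ± √(7 + 8·cos(4θ) + cos(8θ))/(3 + cos(4θ)) of the dynamical (Choi) matrix of the √CNOT-induced reduced dynamics are nonnegative, so the reduced dynamics is completely positive. -/
/-- For every real θ, 0 ≤ 7 + 8·cos(4θ) + cos(8θ) ≤ (3 + cos(4θ))², and consequently both
eigenvalues λ± = 1 ± √(7 + 8·cos(4θ) + cos(8θ))/(3 + cos(4θ)) of the dynamical (Choi) matrix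
of the √CNOT-induced reduced dynamics are nonnegative (complete positivity). -/
theorem choi_eigenvalues_nonneg (θ : ℝ) :
    0 ≤ 7 + 8 * Real.cos (4 * θ) + Real.cos (8 * θ) ∧
    7 + 8 * Real.cos (4 * θ) + Real.cos (8 * θ) ≤ (3 + Real.cos (4 * θ)) ^ 2 ∧
    0 ≤ 1 - Real.sqrt (7 + 8 * Real.cos (4 * θ) + Real.cos (8 * θ)) / (3 + Real.cos (4 * θ)) ∧
    0 ≤ 1 + Real.sqrt (7 + 8 * Real.cos (4 * θ) + Real.cos (8 * θ)) / (3 + Real.cos (4 * θ)) := by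
  have h8 : Real.cos (8 * θ) = 2 * Real.cos (4 * θ) ^ 2 - 1 := by
    have h : 2 * (4 * θ) = 8 * θ := by ring
    rw [← h, Real.cos_two_mul]
  set c := Real.cos (4 * θ) with hc
  have hc1 : -1 ≤ c := Real.neg_one_le_cos _
  have hc2 : c ≤ 1 := Real.cos_le_one _
  have h0 : 0 ≤ 7 + 8 * c + Real.cos (8 * θ) := by rw [h8]; nlinarith
  have h1 : 7 + 8 * c + Real.cos (8 * θ) ≤ (3 + c) ^ 2 := by rw [h8]; nlinarith
  have hden : 0 < 3 + c := by linarith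
  have hs : Real.sqrt (7 + 8 * c + Real.cos (8 * θ)) ≤ 3 + c := by
    have := Real.sqrt_le_sqrt h1
    rwa [Real.sqrt_sq hden.le] at this
  have hsnn : 0 ≤ Real.sqrt (7 + 8 * c + Real.cos (8 * θ)) := Real.sqrt_nonneg _
  refine ⟨h0, h1, ?_, ?_⟩
  · have : Real.sqrt (7 + 8 * c + Real.cos (8 * θ)) / (3 + c) ≤ 1 :=
      (div_le_one hden).2 hs
    linarith
  · positivity
end

section
/- For every real θ with sin θ · cos θ ≠ 0 and cos(2θ) ≠ 0, the 4×4 Hermitian matrix B₂(θ) := sec(2θ)·[[cos²θ, 0, 0, cos²θ],[0, −sin²θ, −sin²θ, 0],[0, −sin²θ, −sin²θ, 0],[cos²θ, 0, 0, cos²θ]] is not positive semidefinite; hence the intermediate dynamical map corresponding to the second application of CNOT is not completely positive. -/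
open Matrix Complex
open scoped ComplexOrder

/-- The dynamical (Choi) matrix B₂(θ) of the intermediate map corresponding to the second
application of the CNOT gate. -/
noncomputable def B2 (θ : ℝ) : Matrix (Fin 4) (Fin 4) ℂ :=
  ((1 / Real.cos (2 * θ) : ℝ) : ℂ) •
    !![(Real.cos θ ^ 2 : ℂ), 0, 0, (Real.cos θ ^ 2 : ℂ);
       0, -(Real.sin θ ^ 2 : ℂ), -(Real.sin θ ^ 2 : ℂ), 0;
       0, -(Real.sin θ ^ 2 : ℂ), -(Real.sin θ ^ 2 : ℂ), 0;
       (Real.cos θ ^ 2 : ℂ), 0, 0, (Real.cos θ ^ 2 : ℂ)]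

/-!
The diagonal entries `B₂(θ)₀₀ = cos²θ / cos 2θ` and `B₂(θ)₁₁ = -sin²θ / cos 2θ` have product
`-(sin θ cos θ / cos 2θ)²`, which is negative, so one of them is negative; but the diagonal of a
positive semidefinite matrix is nonnegative.
-/

lemma B2_apply_zero_zero (θ : ℝ) :
    B2 θ 0 0 = ((Real.cos θ ^ 2 / Real.cos (2 * θ) : ℝ) : ℂ) := by
  simp [B2, div_eq_inv_mul]

lemma B2_apply_one_one (θ : ℝ) :
    B2 θ 1 1 = ((-Real.sin θ ^ 2 / Real.cos (2 * θ) : ℝ) : ℂ) := by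
  simp [B2, div_eq_inv_mul]

lemma B2_diag_mul_neg (θ : ℝ) (h₁ : Real.sin θ * Real.cos θ ≠ 0)
    (h₂ : Real.cos (2 * θ) ≠ 0) :
    Real.cos θ ^ 2 / Real.cos (2 * θ) * (-Real.sin θ ^ 2 / Real.cos (2 * θ)) < 0 := by
  have h : Real.cos θ ^ 2 / Real.cos (2 * θ) * (-Real.sin θ ^ 2 / Real.cos (2 * θ)) =
      -(Real.sin θ * Real.cos θ / Real.cos (2 * θ)) ^ 2 := by
    ring
  rw [h, neg_lt_zero]
  positivity

/-- For sin θ · cos θ ≠ 0 and cos(2θ) ≠ 0, B₂(θ) is not positive semidefinite; hence the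
intermediate dynamical map of the second application of CNOT is not completely positive. -/
theorem B2_not_posSemidef (θ : ℝ) (h₁ : Real.sin θ * Real.cos θ ≠ 0)
    (h₂ : Real.cos (2 * θ) ≠ 0) : ¬ (B2 θ).PosSemidef := by
  intro hB
  have h₀₀ := hB.diag_nonneg (i := 0)
  have h₁₁ := hB.diag_nonneg (i := 1)
  rw [B2_apply_zero_zero, Complex.zero_le_real] at h₀₀
  rw [B2_apply_one_one, Complex.zero_le_real] at h₁₁
  exact (mul_nonneg h₀₀ h₁₁).not_gt (B2_diag_mul_neg θ h₁ h₂)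
end

section
/- Let U be a unitary 2×2 complex matrix and V a 2×2 complex matrix with U·V = −V·U (U and V anticommute), and let W := |0⟩⟨0| ⊗ I₂ + |1⟩⟨1| ⊗ U. Then W·(σz ⊗ V)·W† = I₂ ⊗ V; in particular conjugation of the local operator σz ⊗ V by the controlled-U unitary W again yields a local operator. -/
open Matrix Complex Kronecker

/-- The Pauli Z matrix. -/
def pauliZ : Matrix (Fin 2) (Fin 2) ℂ := !![1, 0; 0, -1]

/-- The controlled-U operator W := |0⟩⟨0| ⊗ I₂ + |1⟩⟨1| ⊗ U. -/
def controlled (U : Matrix (Fin 2) (Fin 2) ℂ) : Matrix (Fin 2 × Fin 2) (Fin 2 × Fin 2) ℂ :=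
  (!![1, 0; 0, 0] : Matrix (Fin 2) (Fin 2) ℂ) ⊗ₖ (1 : Matrix (Fin 2) (Fin 2) ℂ) +
    (!![0, 0; 0, 1] : Matrix (Fin 2) (Fin 2) ℂ) ⊗ₖ U

/-- If U is unitary and U·V = −V·U, then W·(σz ⊗ V)·W† = I₂ ⊗ V: conjugation of the local
operator σz ⊗ V by the controlled-U unitary W again yields a local operator. -/
theorem controlled_conj_anticommuting (U V : Matrix (Fin 2) (Fin 2) ℂ)
    (hU : U ∈ Matrix.unitaryGroup (Fin 2) ℂ) (hUV : U * V = -(V * U)) :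
    controlled U * (pauliZ ⊗ₖ V) * (controlled U)ᴴ =
      (1 : Matrix (Fin 2) (Fin 2) ℂ) ⊗ₖ V := by
  have kronCT : ∀ (A B : Matrix (Fin 2) (Fin 2) ℂ), (A ⊗ₖ B)ᴴ = Aᴴ ⊗ₖ Bᴴ := by
    intro A B
    ext ⟨i, k⟩ ⟨j, l⟩
    simp [Matrix.conjTranspose_apply, Matrix.kroneckerMap_apply, mul_comm]
  set P : Matrix (Fin 2) (Fin 2) ℂ := !![1, 0; 0, 0] with hP
  set Q : Matrix (Fin 2) (Fin 2) ℂ := !![0, 0; 0, 1] with hQ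
  have hUU : U * Uᴴ = 1 := by
    have := (Matrix.mem_unitaryGroup_iff.mp hU)
    simpa [Matrix.star_eq_conjTranspose] using this
  have hPZ : P * pauliZ = P := by
    ext i j; fin_cases i <;> fin_cases j <;>
      simp [hP, pauliZ, Matrix.mul_apply, Fin.sum_univ_two]
  have hQZ : Q * pauliZ = -Q := by
    ext i j; fin_cases i <;> fin_cases j <;>
      simp [hQ, pauliZ, Matrix.mul_apply, Fin.sum_univ_two]
  have hPP : P * P = P := by
    ext i j; fin_cases i <;> fin_cases j <;>
      simp [hP, Matrix.mul_apply, Fin.sum_univ_two]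
  have hPQ : P * Q = 0 := by
    ext i j; fin_cases i <;> fin_cases j <;>
      simp [hP, hQ, Matrix.mul_apply, Fin.sum_univ_two]
  have hQP : Q * P = 0 := by
    ext i j; fin_cases i <;> fin_cases j <;>
      simp [hP, hQ, Matrix.mul_apply, Fin.sum_univ_two]
  have hQQ : Q * Q = Q := by
    ext i j; fin_cases i <;> fin_cases j <;>
      simp [hQ, Matrix.mul_apply, Fin.sum_univ_two]
  have hPH : Pᴴ = P := by
    ext i j; fin_cases i <;> fin_cases j <;> simp [hP]
  have hQH : Qᴴ = Q := by
    ext i j; fin_cases i <;> fin_cases j <;> simp [hQ]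
  have hPQ1 : P + Q = 1 := by
    ext i j; fin_cases i <;> fin_cases j <;> simp [hP, hQ, Matrix.one_apply]
  have hWH : (controlled U)ᴴ = P ⊗ₖ 1 + Q ⊗ₖ Uᴴ := by
    rw [controlled, Matrix.conjTranspose_add, kronCT, kronCT, hPH, hQH,
      Matrix.conjTranspose_one]
  have hUVU : U * V * Uᴴ = -V := by
    rw [hUV]
    calc -(V * U) * Uᴴ = -(V * (U * Uᴴ)) := by noncomm_ring
    _ = -V := by rw [hUU]; simp
  rw [hWH]
  simp only [controlled]
  rw [← hP, ← hQ]
  rw [Matrix.add_mul, ← Matrix.mul_kronecker_mul, ← Matrix.mul_kronecker_mul, hPZ, hQZ,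
    Matrix.one_mul]
  have : (-Q) ⊗ₖ (U * V) = -(Q ⊗ₖ (U * V)) := by
    simp [Matrix.kroneckerMap, Matrix.neg_apply]; rfl
  rw [this, ← sub_eq_add_neg, Matrix.sub_mul, Matrix.mul_add, Matrix.mul_add,
    ← Matrix.mul_kronecker_mul, ← Matrix.mul_kronecker_mul, ← Matrix.mul_kronecker_mul,
    ← Matrix.mul_kronecker_mul, hPP, hPQ, hQP, hQQ, Matrix.mul_assoc U V, hUVU]
  have h1 : (0 : Matrix (Fin 2) (Fin 2) ℂ) ⊗ₖ (V * Uᴴ) = 0 := Matrix.zero_kronecker _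
  have h2 : (0 : Matrix (Fin 2) (Fin 2) ℂ) ⊗ₖ (U * (V * 1)) = 0 := Matrix.zero_kronecker _
  have h3 : Q ⊗ₖ (-V) = -(Q ⊗ₖ V) := by
    ext ⟨i, k⟩ ⟨j, l⟩
    simp [Matrix.kroneckerMap_apply, Matrix.neg_apply]
  rw [h1, h2, h3, Matrix.mul_one]
  have : P ⊗ₖ V + 0 - (0 + -(Q ⊗ₖ V)) = (P + Q) ⊗ₖ V := by
    rw [Matrix.add_kronecker]; abel
  rw [this, hPQ1]
end
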